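/- Let D be an oriented graph whose underlying graph is a split graph with split partition V(D) = K ∪ S, where K induces a clique and S an independent set, and |K| ≥ 2. Let S_s and S_t be, respectively, the sets of sinks and sources of D that lie in S. Then hn_{P3}(D) ≤ |S_s ∪ S_t| + 2, and moreover every hull set of D in the P3 convexity contains S_s ∪ S_t; hence |S_s ∪ S_t| ≤ hn_{P3}(D) ≤ |S_s ∪ S_t| + 2. -/

import Mathlib

/-! Basic machinery for convexity on oriented graphs. -/

/-- A directed walk along the arc relation `A` from `u` to `v`,
recorded as the (nonempty) list of its vertices. Its length is `l.length - 1`. -/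
def DiWalk {V : Type*} (A : V → V → Prop) (u v : V) (l : List V) : Prop :=
  l.head? = some u ∧ l.getLast? = some v ∧ l.Chain' A

/-- A shortest directed walk (geodesic) from `u` to `v`:
a directed walk of minimum length among all directed `(u,v)`-walks. -/
def IsGeodesic {V : Type*} (A : V → V → Prop) (u v : V) (l : List V) : Prop :=
  DiWalk A u v l ∧ ∀ l', DiWalk A u v l' → l.length ≤ l'.length

/-- Geodetic interval: `u`, `v`, and all vertices lying on a shortest directed
`(u,v)`-path or on a shortest directed `(v,u)`-path. -/
def geoInterval {V : Type*} (A : V → V → Prop) (u v : V) : Set V :=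
  {u, v} ∪ {w | (∃ l, IsGeodesic A u v l ∧ w ∈ l) ∨ (∃ l, IsGeodesic A v u l ∧ w ∈ l)}

/-- P3 interval: `u`, `v`, and all vertices lying on a directed `(u,v)`- or
`(v,u)`-path of length two. -/
def p3Interval {V : Type*} (A : V → V → Prop) (u v : V) : Set V :=
  {u, v} ∪ {w | (A u w ∧ A w v) ∨ (A v w ∧ A w u)}

/-- P3* interval: `u`, `v`, and all vertices lying on a shortest directed `(u,v)`- or
`(v,u)`-path of length two (i.e. the corresponding endpoints are not adjacent). -/
def p3sInterval {V : Type*} (A : V → V → Prop) (u v : V) : Set V :=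
  {u, v} ∪ {w | (A u w ∧ A w v ∧ ¬ A u v) ∨ (A v w ∧ A w u ∧ ¬ A v u)}

/-- A set is convex for the interval function `I` if it is closed under `I`. -/
def IsConvexSet {V : Type*} (I : V → V → Set V) (C : Set V) : Prop :=
  ∀ u ∈ C, ∀ v ∈ C, I u v ⊆ C

/-- The convex hull of `S`: the smallest convex set containing `S`. -/
def convexHullD {V : Type*} (I : V → V → Set V) (S : Set V) : Set V :=
  ⋂₀ {C | IsConvexSet I C ∧ S ⊆ C}

/-- `S` is an interval set if applying `I` to pairs of `S` covers all vertices. -/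
def IsIntervalSet {V : Type*} (I : V → V → Set V) (S : Set V) : Prop :=
  (⋃ u ∈ S, ⋃ v ∈ S, I u v) = Set.univ

/-- `S` is a hull set if its convex hull is the whole vertex set. -/
def IsHullSet {V : Type*} (I : V → V → Set V) (S : Set V) : Prop :=
  convexHullD I S = Set.univ

/-- The interval number: minimum cardinality of an interval set. -/
noncomputable def intervalNumber {V : Type*} (I : V → V → Set V) : ℕ :=
  sInf {k | ∃ S : Set V, IsIntervalSet I S ∧ S.ncard = k}

/-- The hull number: minimum cardinality of a hull set. -/
noncomputable def hullNumber {V : Type*} (I : V → V → Set V) : ℕ :=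
  sInf {k | ∃ S : Set V, IsHullSet I S ∧ S.ncard = k}

/-- `v` is reachable from `u` by a directed walk. -/
def Reach {V : Type*} (A : V → V → Prop) (u v : V) : Prop :=
  ∃ l, DiWalk A u v l

/-- An oriented graph: no loops and at most one arc between any two vertices. -/
def IsOriented {V : Type*} (A : V → V → Prop) : Prop :=
  ∀ u v, A u v → ¬ A v u

/-- Strong connectivity. -/
def StronglyConnected {V : Type*} (A : V → V → Prop) : Prop :=
  ∀ u v, Reach A u v

/-- Connectivity of the underlying undirected graph. -/
def ConnectedD {V : Type*} (A : V → V → Prop) : Prop :=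
  ∀ u v : V, Reach (fun a b => A a b ∨ A b a) u v

/-- A strong component: an equivalence class of mutual reachability. -/
def IsStrongComponent {V : Type*} (A : V → V → Prop) (C : Set V) : Prop :=
  ∃ v, C = {u | Reach A u v ∧ Reach A v u}

/-- A sink strong component: a strong component with no arc leaving it. -/
def IsSinkComponent {V : Type*} (A : V → V → Prop) (C : Set V) : Prop :=
  IsStrongComponent A C ∧ ∀ u ∈ C, ∀ w, w ∉ C → ¬ A u w

/-- A source strong component: a strong component with no arc entering it. -/
def IsSourceComponent {V : Type*} (A : V → V → Prop) (C : Set V) : Prop :=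
  IsStrongComponent A C ∧ ∀ u ∈ C, ∀ w, w ∉ C → ¬ A w u

/-- The out-section of `u`: all vertices reachable from `u`. -/
def outSection {V : Type*} (A : V → V → Prop) (u : V) : Set V :=
  {w | Reach A u w}

/-- The in-section of `u`: all vertices from which `u` is reachable. -/
def inSection {V : Type*} (A : V → V → Prop) (u : V) : Set V :=
  {w | Reach A w u}

/-- A tournament: an oriented graph where every two distinct vertices are adjacent. -/
def IsTournament {V : Type*} (A : V → V → Prop) : Prop :=
  (∀ u v, A u v → ¬ A v u) ∧ ∀ u v : V, u ≠ v → A u v ∨ A v u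

/-- The number of arcs of the digraph given by `A`. -/
noncomputable def arcCount {V : Type*} (A : V → V → Prop) : ℕ :=
  Nat.card {p : V × V // A p.1 p.2}

/-!
A vertex of `S` that is a sink or a source is never the middle vertex of a directed `P₃`, so
deleting it leaves a convex set; hence it lies in every hull set. Every other vertex of `S` has
an in-neighbour and an out-neighbour, both in `K`, so it enters the hull as soon as `K` does.

It remains to see that two vertices of the tournament on `K` generate `K`. Among the pairs
`(a, b)` in which `a` reaches all of `K` and all of `K` reaches `b` inside `K`, take one whose
hull `C` meets `K` in as many vertices as possible. By convexity, a vertex of `K \ C` cannot have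
both an in-neighbour and an out-neighbour in `C`. If every vertex of `K \ C` has an out-neighbour
in `C`, no arc leaves `C` inside `K`, and `a` reaches nothing outside `C`; symmetrically for `b`.
Otherwise some `p ∈ K \ C` dominates `C` and some `m ∈ K \ C` is dominated by `C`; then every
vertex of `C ∩ K` lies on the path `p → · → m`, and `(p, m)` is a better pair.
-/

open Relation Function

section Hull

variable {V : Type*} (I : V → V → Set V)

lemma subset_convexHullD (s : Set V) : s ⊆ convexHullD I s :=
  fun _ hv _ hC => hC.2 hv

lemma convexHullD_isConvexSet (s : Set V) : IsConvexSet I (convexHullD I s) :=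
  fun u hu v hv _ hw C hC => hC.1 u (hu C hC) v (hv C hC) hw

variable {I}

lemma convexHullD_subset {s C : Set V} (hC : IsConvexSet I C) (hsC : s ⊆ C) :
    convexHullD I s ⊆ C :=
  Set.sInter_subset_of_mem ⟨hC, hsC⟩

lemma convexHullD_mono {s t : Set V} (hst : s ⊆ t) : convexHullD I s ⊆ convexHullD I t :=
  convexHullD_subset (convexHullD_isConvexSet I t) (hst.trans (subset_convexHullD I t))

lemma hullNumber_le {s : Set V} (hs : IsHullSet I s) : hullNumber I ≤ s.ncard :=
  Nat.sInf_le ⟨s, hs, rfl⟩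

lemma ncard_le_hullNumber [Finite V] {T : Set V} (hT : ∀ H, IsHullSet I H → T ⊆ H) :
    T.ncard ≤ hullNumber I := by
  have huniv : IsHullSet I Set.univ := Set.eq_univ_of_univ_subset (subset_convexHullD I _)
  obtain ⟨H, hH, hcard⟩ := Nat.sInf_mem (⟨_, Set.univ, huniv, rfl⟩ :
    {k | ∃ H : Set V, IsHullSet I H ∧ H.ncard = k}.Nonempty)
  unfold hullNumber
  rw [← hcard]
  exact Set.ncard_le_ncard (hT H hH)

end Hull

lemma exists_forall_reflTransGen_of_total {V : Type*} [Finite V] {R : V → V → Prop}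
    {K : Set V} (htot : ∀ u ∈ K, ∀ v ∈ K, u ≠ v → R u v ∨ R v u) (hne : K.Nonempty) :
    ∃ a ∈ K, ∀ x ∈ K, ReflTransGen R a x := by
  obtain ⟨a, haK, hmax⟩ := Set.exists_max_image K
    (fun a => {y ∈ K | ReflTransGen R a y}.ncard) (Set.toFinite K) hne
  refine ⟨a, haK, fun x hx => by_contra fun hax => ?_⟩
  have hlt : {y ∈ K | ReflTransGen R a y} ⊂ {y ∈ K | ReflTransGen R x y} := by
    refine (Set.ssubset_iff_of_subset ?_).2 ⟨x, ⟨hx, .refl⟩, fun h => hax h.2⟩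
    rintro y ⟨hyK, hay⟩
    refine ⟨hyK, ?_⟩
    rcases htot x hx y hyK (by rintro rfl; exact hax hay) with h | h
    · exact .single h
    · exact absurd (hay.tail h) hax
  exact (Set.ncard_lt_ncard hlt).not_ge (hmax x hx)

section P3

variable {V : Type*} {A : V → V → Prop}

def arcsWithin (A : V → V → Prop) (K : Set V) (u v : V) : Prop :=
  u ∈ K ∧ v ∈ K ∧ A u v

lemma mem_p3Interval_of_arcs {u w v : V} (huw : A u w) (hwv : A w v) :
    w ∈ p3Interval A u v :=
  Or.inr (Or.inl ⟨huw, hwv⟩)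

lemma IsConvexSet.mem_of_arcs {C : Set V} (hC : IsConvexSet (p3Interval A) C) {u w v : V}
    (hu : u ∈ C) (hv : v ∈ C) (huw : A u w) (hwv : A w v) : w ∈ C :=
  hC u hu v hv (mem_p3Interval_of_arcs huw hwv)

lemma isConvexSet_p3Interval_compl_singleton {v : V} (hv : (∀ u, ¬ A v u) ∨ ∀ u, ¬ A u v) :
    IsConvexSet (p3Interval A) {v}ᶜ := by
  rintro x hx y hy w ((rfl | rfl) | ⟨hxw, hwy⟩ | ⟨hyw, hwx⟩)
  · exact hx
  · exact hy
  · rintro rfl; exact hv.elim (· _ hwy) (· _ hxw)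
  · rintro rfl; exact hv.elim (· _ hwx) (· _ hyw)

lemma IsHullSet.mem_of_sink_or_source {H : Set V} (hH : IsHullSet (p3Interval A) H) {v : V}
    (hv : (∀ u, ¬ A v u) ∨ ∀ u, ¬ A u v) : v ∈ H := by
  by_contra hvH
  have hsub := convexHullD_subset (isConvexSet_p3Interval_compl_singleton hv)
    (Set.subset_compl_singleton_iff.2 hvH)
  exact hsub (Set.eq_univ_iff_forall.1 hH v) rfl

lemma IsConvexSet.mem_of_reflTransGen_of_forall_out {C K : Set V}
    (hC : IsConvexSet (p3Interval A) C) (hout : ∀ w ∈ K, w ∉ C → ∃ y ∈ C, A w y)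
    {a x : V} (ha : a ∈ C) (hax : ReflTransGen (arcsWithin A K) a x) : x ∈ C := by
  induction hax with
  | refl => exact ha
  | tail _ hyz ih =>
    obtain ⟨-, hzK, hyz⟩ := hyz
    by_contra hz
    obtain ⟨y', hy', hzy'⟩ := hout _ hzK hz
    exact hz (hC.mem_of_arcs ih hy' hyz hzy')

lemma IsConvexSet.mem_of_reflTransGen_of_forall_in {C K : Set V}
    (hC : IsConvexSet (p3Interval A) C) (hin : ∀ w ∈ K, w ∉ C → ∃ y ∈ C, A y w)
    {b x : V} (hb : b ∈ C) (hxb : ReflTransGen (arcsWithin A K) x b) : x ∈ C := by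
  induction hxb using ReflTransGen.head_induction_on with
  | refl => exact hb
  | head hxy _ ih =>
    obtain ⟨hxK, -, hxy⟩ := hxy
    by_contra hx
    obtain ⟨y', hy', hy'x⟩ := hin _ hxK hx
    exact hx (hC.mem_of_arcs hy' ih hy'x hxy)

lemma inter_subset_convexHullD_pair {K C : Set V}
    (hK : ∀ u ∈ K, ∀ v ∈ K, u ≠ v → A u v ∨ A v u) {p m : V}
    (hpK : p ∈ K) (hpC : p ∉ C) (hpin : ∀ x ∈ C, ¬ A x p)
    (hmK : m ∈ K) (hmC : m ∉ C) (hmout : ∀ x ∈ C, ¬ A m x) :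
    C ∩ K ⊆ convexHullD (p3Interval A) {p, m} := by
  rintro x ⟨hxC, hxK⟩
  have hpx : A p x :=
    (hK p hpK x hxK (ne_of_mem_of_not_mem hxC hpC).symm).resolve_right (hpin x hxC)
  have hxm : A x m :=
    (hK x hxK m hmK (ne_of_mem_of_not_mem hxC hmC)).resolve_right (hmout x hxC)
  exact (convexHullD_isConvexSet _ _).mem_of_arcs (subset_convexHullD _ _ (.inl rfl))
    (subset_convexHullD _ _ (.inr rfl)) hpx hxm

theorem exists_pair_subset_convexHullD_p3Interval [Finite V] {K : Set V}
    (hK : ∀ u ∈ K, ∀ v ∈ K, u ≠ v → A u v ∨ A v u) (hne : K.Nonempty) :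
    ∃ a ∈ K, ∃ b ∈ K, K ⊆ convexHullD (p3Interval A) {a, b} := by
  have htot (u) (hu : u ∈ K) (v) (hv : v ∈ K) (huv : u ≠ v) :
      arcsWithin A K u v ∨ arcsWithin A K v u :=
    (hK u hu v hv huv).imp (fun h => ⟨hu, hv, h⟩) (fun h => ⟨hv, hu, h⟩)
  obtain ⟨a₀, ha₀K, ha₀⟩ := exists_forall_reflTransGen_of_total htot hne
  obtain ⟨b₀, hb₀K, hb₀⟩ := exists_forall_reflTransGen_of_total (R := swap (arcsWithin A K))
    (fun u hu v hv huv => htot v hv u hu huv.symm) hne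
  obtain ⟨⟨a, b⟩, ⟨haK, hbK, ha, hb⟩, hmax⟩ := Set.exists_max_image
    {q : V × V | q.1 ∈ K ∧ q.2 ∈ K ∧ (∀ x ∈ K, ReflTransGen (arcsWithin A K) q.1 x) ∧
      ∀ x ∈ K, ReflTransGen (arcsWithin A K) x q.2}
    (fun q => (convexHullD (p3Interval A) {q.1, q.2} ∩ K).ncard) (Set.toFinite _)
    ⟨(a₀, b₀), ha₀K, hb₀K, ha₀, fun x hx => reflTransGen_swap.1 (hb₀ x hx)⟩
  refine ⟨a, haK, b, hbK, fun w hwK => by_contra fun hwC => ?_⟩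
  set C := convexHullD (p3Interval A) {a, b}
  have hC : IsConvexSet (p3Interval A) C := convexHullD_isConvexSet _ _
  have haC : a ∈ C := subset_convexHullD _ _ (.inl rfl)
  have hbC : b ∈ C := subset_convexHullD _ _ (.inr rfl)
  by_cases hout : ∀ w ∈ K, w ∉ C → ∃ y ∈ C, A w y
  · exact hwC (hC.mem_of_reflTransGen_of_forall_out hout haC (ha w hwK))
  by_cases hin : ∀ w ∈ K, w ∉ C → ∃ y ∈ C, A y w
  · exact hwC (hC.mem_of_reflTransGen_of_forall_in hin hbC (hb w hwK))
  push Not at hout hin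
  obtain ⟨m, hmK, hmC, hmout⟩ := hout
  obtain ⟨p, hpK, hpC, hpin⟩ := hin
  have hpa : A p a :=
    (hK p hpK a haK (ne_of_mem_of_not_mem haC hpC).symm).resolve_right (hpin a haC)
  have hbm : A b m :=
    (hK b hbK m hmK (ne_of_mem_of_not_mem hbC hmC)).resolve_right (hmout b hbC)
  have hle := hmax (p, m) ⟨hpK, hmK, fun x hx => .head ⟨hpK, haK, hpa⟩ (ha x hx),
    fun x hx => (hb x hx).tail ⟨hbK, hmK, hbm⟩⟩
  have hlt : (C ∩ K).ncard < (convexHullD (p3Interval A) {p, m} ∩ K).ncard :=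
    calc (C ∩ K).ncard < (insert p (C ∩ K)).ncard :=
          Set.ncard_lt_ncard (Set.ssubset_insert fun h => hpC h.1)
      _ ≤ (convexHullD (p3Interval A) {p, m} ∩ K).ncard := Set.ncard_le_ncard <|
          Set.insert_subset ⟨subset_convexHullD _ _ (.inl rfl), hpK⟩
          (Set.subset_inter (inter_subset_convexHullD_pair hK hpK hpC hpin hmK hmC hmout)
            Set.inter_subset_right)
  exact hlt.not_ge hle

theorem isHullSet_p3Interval_of_split {K S : Set V} (hcover : K ∪ S = Set.univ)
    (hS : ∀ u ∈ S, ∀ v ∈ S, ¬ A u v) {T : Set V} (hKT : K ⊆ convexHullD (p3Interval A) T)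
    (hST : ∀ v ∈ S, ((∀ u, ¬ A v u) ∨ ∀ u, ¬ A u v) → v ∈ T) :
    IsHullSet (p3Interval A) T := by
  have hmemK (x : V) (hx : x ∉ S) : x ∈ K := (hcover ▸ Set.mem_univ x).resolve_right hx
  refine Set.eq_univ_of_forall fun v => ?_
  by_cases hvS : v ∈ S
  swap
  · exact hKT (hmemK v hvS)
  by_cases hsinkSource : (∀ u, ¬ A v u) ∨ ∀ u, ¬ A u v
  · exact subset_convexHullD _ _ (hST v hvS hsinkSource)
  push Not at hsinkSource
  obtain ⟨⟨u, hvu⟩, u', hu'v⟩ := hsinkSource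
  have huK := hmemK u fun hu => hS v hvS u hu hvu
  have hu'K := hmemK u' fun hu' => hS u' hu' v hvS hu'v
  exact (convexHullD_isConvexSet _ _).mem_of_arcs (hKT hu'K) (hKT huK) hu'v hvu

end P3

theorem stmt_15_general {V : Type*} [Finite V] (A : V → V → Prop)
    (K S : Set V) (hcover : K ∪ S = Set.univ)
    (hK : ∀ u ∈ K, ∀ v ∈ K, u ≠ v → A u v ∨ A v u)
    (hS : ∀ u ∈ S, ∀ v ∈ S, ¬ A u v)
    (hK2 : 2 ≤ K.ncard)
    (Ss St : Set V)
    (hSs : Ss = {v | v ∈ S ∧ ∀ u, ¬ A v u})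
    (hSt : St = {v | v ∈ S ∧ ∀ u, ¬ A u v}) :
    (∀ H : Set V, IsHullSet (p3Interval A) H → Ss ∪ St ⊆ H) ∧
    hullNumber (p3Interval A) ≤ (Ss ∪ St).ncard + 2 ∧
    (Ss ∪ St).ncard ≤ hullNumber (p3Interval A) := by
  have hforced (H : Set V) (hH : IsHullSet (p3Interval A) H) : Ss ∪ St ⊆ H := by
    rintro v (hv | hv)
    · exact hH.mem_of_sink_or_source (.inl (hSs ▸ hv).2)
    · exact hH.mem_of_sink_or_source (.inr (hSt ▸ hv).2)
  obtain ⟨a, -, b, -, hab⟩ :=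
    exists_pair_subset_convexHullD_p3Interval hK (Set.nonempty_of_ncard_ne_zero (by omega))
  have hhull : IsHullSet (p3Interval A) (Ss ∪ St ∪ {a, b}) := by
    refine isHullSet_p3Interval_of_split hcover hS
      (hab.trans (convexHullD_mono Set.subset_union_right)) fun v hv => ?_
    rintro (h | h)
    · exact .inl (.inl (by rw [hSs]; exact ⟨hv, h⟩))
    · exact .inl (.inr (by rw [hSt]; exact ⟨hv, h⟩))
  refine ⟨hforced, ?_, ncard_le_hullNumber hforced⟩
  calc hullNumber (p3Interval A) ≤ (Ss ∪ St ∪ {a, b}).ncard := hullNumber_le hhull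
    _ ≤ (Ss ∪ St).ncard + ({a, b} : Set V).ncard := Set.ncard_union_le _ _
    _ ≤ (Ss ∪ St).ncard + 2 := by
      grw [Set.ncard_insert_le, Set.ncard_singleton]

/-- For an oriented graph whose underlying graph is split with
clique side `K` (`|K| ≥ 2`) and independent side `S`, where `Ss` and `St` are
the sinks and sources lying in `S`: every P3 hull set contains `Ss ∪ St`, and
`|Ss ∪ St| ≤ hn_{P3}(D) ≤ |Ss ∪ St| + 2`. -/
theorem stmt_15 {V : Type*} [Finite V] (A : V → V → Prop) (hA : IsOriented A)
    (K S : Set V) (hcover : K ∪ S = Set.univ) (hdisj : Disjoint K S)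
    (hK : ∀ u ∈ K, ∀ v ∈ K, u ≠ v → A u v ∨ A v u)
    (hS : ∀ u ∈ S, ∀ v ∈ S, ¬ A u v)
    (hK2 : 2 ≤ K.ncard)
    (Ss St : Set V)
    (hSs : Ss = {v | v ∈ S ∧ ∀ u, ¬ A v u})
    (hSt : St = {v | v ∈ S ∧ ∀ u, ¬ A u v}) :
    (∀ H : Set V, IsHullSet (p3Interval A) H → Ss ∪ St ⊆ H) ∧
    hullNumber (p3Interval A) ≤ (Ss ∪ St).ncard + 2 ∧
    (Ss ∪ St).ncard ≤ hullNumber (p3Interval A) :=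
  stmt_15_general A K S hcover hK hS hK2 Ss St hSs hSt
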